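/- arXiv:2209.11837 — 5 statements merged into one kernel-verified Lean document; each statement's English description precedes it below -/
import Mathlib

section
/- Let v = (5/8, 7/10, 1), F1 = (3/5, 1/2, 1/2), F2 = (4/5, 4/5, 1/2), q = 3/10. For every policy pair (π¹, π²) of probability vectors over the three prices satisfying Σᵢ vᵢ π¹ᵢ = Σᵢ vᵢ π²ᵢ (procedural fairness) and (Σᵢ vᵢ F1ᵢ π¹ᵢ)/(Σᵢ F1ᵢ π¹ᵢ) = (Σᵢ vᵢ F2ᵢ π²ᵢ)/(Σᵢ F2ᵢ π²ᵢ) (substantive fairness), the expected revenue q·Σᵢ vᵢ F1ᵢ π¹ᵢ + (1−q)·Σᵢ vᵢ F2ᵢ π²ᵢ is at most 74/145. -/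
/-- Optimality of the doubly fair random policy: for `v = (5/8, 7/10, 1)`,
`F1 = (3/5, 1/2, 1/2)`, `F2 = (4/5, 4/5, 1/2)`, `q = 3/10`, every policy pair
of probability vectors that is procedurally fair (equal expected proposed
prices) and substantively fair (equal expected accepted prices) has expected
revenue at most `74/145`. -/
theorem stmt_4 (a1 a2 a3 b1 b2 b3 : ℝ)
    (ha1 : 0 ≤ a1) (ha2 : 0 ≤ a2) (ha3 : 0 ≤ a3) (hasum : a1 + a2 + a3 = 1)
    (hb1 : 0 ≤ b1) (hb2 : 0 ≤ b2) (hb3 : 0 ≤ b3) (hbsum : b1 + b2 + b3 = 1)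
    (hproc : (5/8) * a1 + (7/10) * a2 + 1 * a3 = (5/8) * b1 + (7/10) * b2 + 1 * b3)
    (hsubst :
      ((5/8) * (3/5) * a1 + (7/10) * (1/2) * a2 + 1 * (1/2) * a3) /
        ((3/5) * a1 + (1/2) * a2 + (1/2) * a3)
      = ((5/8) * (4/5) * b1 + (7/10) * (4/5) * b2 + 1 * (1/2) * b3) /
        ((4/5) * b1 + (4/5) * b2 + (1/2) * b3)) :
    (3/10) * ((5/8) * (3/5) * a1 + (7/10) * (1/2) * a2 + 1 * (1/2) * a3)
      + (1 - 3/10) * ((5/8) * (4/5) * b1 + (7/10) * (4/5) * b2 + 1 * (1/2) * b3)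
      ≤ 74/145 := by
  have hd1 : (0:ℝ) < (3/5) * a1 + (1/2) * a2 + (1/2) * a3 := by nlinarith
  have hd2 : (0:ℝ) < (4/5) * b1 + (4/5) * b2 + (1/2) * b3 := by nlinarith
  rw [div_eq_div_iff hd1.ne' hd2.ne'] at hsubst
  nlinarith [mul_nonneg ha1 hb2, mul_nonneg ha2 hb2, mul_nonneg ha1 hb1,
    mul_nonneg ha2 hb1, mul_nonneg ha3 hb3, mul_nonneg ha1 hb3,
    mul_nonneg ha3 hb2, mul_nonneg ha2 hb3, mul_nonneg ha3 hb1,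
    sq_nonneg (a1 - 20/29), sq_nonneg (b2 - 25/29), sq_nonneg (a1 + b2 - 45/29)]
end

section
/- Let v ∈ ℝ^d have entries in (0,1], let F, F̂ ∈ ℝ^d satisfy F_min ≤ Fᵢ ≤ 1 and F_min ≤ F̂ᵢ ≤ 1 for all i, where F_min > 0, and let π ∈ ℝ^d be a probability vector. Then |(Σᵢ vᵢ F̂ᵢ πᵢ)/(Σᵢ F̂ᵢ πᵢ) − (Σᵢ vᵢ Fᵢ πᵢ)/(Σᵢ Fᵢ πᵢ)| ≤ (2/F_min²) · Σᵢ |F̂ᵢ − Fᵢ| πᵢ. -/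
/-- Lipschitz-type estimation error bound for the expected accepted price:
if all entries of `F` and `F̂` lie in `[F_min, 1]` with `F_min > 0`, then the
expected accepted prices under `F̂` and `F` differ by at most
`(2 / F_min²) ∑ᵢ |F̂ᵢ − Fᵢ| πᵢ`. -/
theorem stmt_7 (d : ℕ) (v F Fhat π : Fin d → ℝ) (Fmin : ℝ) (hFmin : 0 < Fmin)
    (hv : ∀ i, 0 < v i ∧ v i ≤ 1)
    (hF : ∀ i, Fmin ≤ F i ∧ F i ≤ 1) (hFhat : ∀ i, Fmin ≤ Fhat i ∧ Fhat i ≤ 1)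
    (hπ : ∀ i, 0 ≤ π i) (hπsum : ∑ i, π i = 1) :
    |(∑ i, v i * Fhat i * π i) / (∑ i, Fhat i * π i)
      - (∑ i, v i * F i * π i) / (∑ i, F i * π i)|
      ≤ (2 / Fmin ^ 2) * ∑ i, |Fhat i - F i| * π i := by
  set A := ∑ i, v i * Fhat i * π i with hA
  set B := ∑ i, Fhat i * π i with hBdef
  set C := ∑ i, v i * F i * π i with hC
  set D := ∑ i, F i * π i with hDdef
  set E := ∑ i, |Fhat i - F i| * π i with hE
  have hB : Fmin ≤ B := by
    calc Fmin = ∑ i, Fmin * π i := by rw [← Finset.mul_sum, hπsum, mul_one]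
    _ ≤ B := Finset.sum_le_sum fun i _ =>
        mul_le_mul_of_nonneg_right (hFhat i).1 (hπ i)
  have hD : Fmin ≤ D := by
    calc Fmin = ∑ i, Fmin * π i := by rw [← Finset.mul_sum, hπsum, mul_one]
    _ ≤ D := Finset.sum_le_sum fun i _ =>
        mul_le_mul_of_nonneg_right (hF i).1 (hπ i)
  have hBpos : 0 < B := lt_of_lt_of_le hFmin hB
  have hDpos : 0 < D := lt_of_lt_of_le hFmin hD
  have hDle : D ≤ 1 := by
    calc D ≤ ∑ i, 1 * π i := Finset.sum_le_sum fun i _ =>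
        mul_le_mul_of_nonneg_right (hF i).2 (hπ i)
    _ = 1 := by simp [hπsum]
  have hCnn : 0 ≤ C := Finset.sum_nonneg fun i _ =>
    mul_nonneg (mul_nonneg (hv i).1.le (le_trans hFmin.le (hF i).1)) (hπ i)
  have hCle : C ≤ 1 := by
    calc C ≤ ∑ i, 1 * 1 * π i := Finset.sum_le_sum fun i _ =>
        mul_le_mul_of_nonneg_right
          (mul_le_mul (hv i).2 (hF i).2 (le_trans hFmin.le (hF i).1) zero_le_one) (hπ i)
    _ = 1 := by simp [hπsum]
  have hEnn : 0 ≤ E := Finset.sum_nonneg fun i _ => mul_nonneg (abs_nonneg _) (hπ i)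
  have hAC : |A - C| ≤ E := by
    rw [hA, hC, ← Finset.sum_sub_distrib]
    refine (Finset.abs_sum_le_sum_abs _ _).trans (Finset.sum_le_sum fun i _ => ?_)
    have : v i * Fhat i * π i - v i * F i * π i = v i * ((Fhat i - F i) * π i) := by ring
    rw [this, abs_mul, abs_mul, abs_of_nonneg (hπ i)]
    calc |v i| * (|Fhat i - F i| * π i) ≤ 1 * (|Fhat i - F i| * π i) :=
        mul_le_mul_of_nonneg_right (abs_le.2 ⟨by linarith [(hv i).1], (hv i).2⟩)
          (mul_nonneg (abs_nonneg _) (hπ i))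
    _ = |Fhat i - F i| * π i := one_mul _
  have hDB : |D - B| ≤ E := by
    rw [hDdef, hBdef, ← Finset.sum_sub_distrib]
    refine (Finset.abs_sum_le_sum_abs _ _).trans (Finset.sum_le_sum fun i _ => ?_)
    have : F i * π i - Fhat i * π i = (F i - Fhat i) * π i := by ring
    rw [this, abs_mul, abs_of_nonneg (hπ i), abs_sub_comm]
  have key : A / B - C / D = (A * D - B * C) / (B * D) :=
    div_sub_div _ _ (ne_of_gt hBpos) (ne_of_gt hDpos)
  rw [key, abs_div, abs_of_pos (mul_pos hBpos hDpos)]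
  have hnum : |A * D - B * C| ≤ 2 * E := by
    have : A * D - B * C = (A - C) * D + C * (D - B) := by ring
    rw [this]
    calc |(A - C) * D + C * (D - B)| ≤ |(A - C) * D| + |C * (D - B)| := abs_add_le _ _
    _ = |A - C| * D + C * |D - B| := by
        rw [abs_mul, abs_mul, abs_of_pos hDpos, abs_of_nonneg hCnn]
    _ ≤ E * 1 + 1 * E :=
        add_le_add (mul_le_mul hAC hDle hDpos.le hEnn)
          (mul_le_mul hCle hDB (abs_nonneg _) zero_le_one)
    _ = 2 * E := by ring
  calc |A * D - B * C| / (B * D) ≤ (2 * E) / (Fmin ^ 2) :=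
      div_le_div₀ (by linarith) hnum (pow_pos hFmin 2)
        (by rw [sq]; exact mul_le_mul hB hD hFmin.le hBpos.le)
  _ = (2 / Fmin ^ 2) * E := by ring
end

section
/- Let v = (5/8, 7/10, 1), F1 = (3/5, 1/2, 1/2), F2 = (4/5, 4/5, 1/2), q = 3/10. Suppose a policy pair (π¹, π²) of probability vectors satisfies, for some V_s ∈ (5/8, 1) and α ∈ ℝ: Σᵢ vᵢ π¹ᵢ = Σᵢ vᵢ π²ᵢ = V_s + α, and Σᵢ (vᵢ − V_s)·F1ᵢ·π¹ᵢ = 0, and Σᵢ (vᵢ − V_s)·F2ᵢ·π²ᵢ = 0. Then the expected revenue satisfies q·Σᵢ vᵢ F1ᵢ π¹ᵢ + (1−q)·Σᵢ vᵢ F2ᵢ π²ᵢ = (71/100)·V_s + ((100 − 142·V_s)/(25·(8V_s − 5)·(1 − V_s)))·V_s·α. -/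
/-!
Within one group the three linear constraints (total mass, expected proposed price,
expected accepted price) leave the revenue `∑ vᵢ Fᵢ πᵢ` affine in `α`: eliminating the
policy gives `V_s/2 + 4 V_s α / (8V_s − 5)` in the first group and
`(4/5) V_s − (4/5) V_s α / (1 − V_s)` in the second. Mixing them with weights `3/10` and
`7/10` yields the closed form.
-/

lemma groupOne_revenue_eq {a1 a2 a3 Vs α : ℝ} (hVs : 8 * Vs - 5 ≠ 0)
    (hsum : a1 + a2 + a3 = 1)
    (hprop : (5/8) * a1 + (7/10) * a2 + 1 * a3 = Vs + α)
    (hacc : (5/8 - Vs) * (3/5) * a1 + (7/10 - Vs) * (1/2) * a2 + (1 - Vs) * (1/2) * a3 = 0) :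
    (5/8) * (3/5) * a1 + (7/10) * (1/2) * a2 + 1 * (1/2) * a3
      = Vs / 2 + 4 * Vs * α / (8 * Vs - 5) := by
  rw [← sub_eq_iff_eq_add', eq_div_iff hVs]
  linear_combination (-(5/2) * Vs) * hsum + (4 * Vs) * hprop - 5 * hacc

lemma groupTwo_revenue_eq {b1 b2 b3 Vs α : ℝ} (hVs : 1 - Vs ≠ 0)
    (hsum : b1 + b2 + b3 = 1)
    (hprop : (5/8) * b1 + (7/10) * b2 + 1 * b3 = Vs + α)
    (hacc : (5/8 - Vs) * (4/5) * b1 + (7/10 - Vs) * (4/5) * b2 + (1 - Vs) * (1/2) * b3 = 0) :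
    (5/8) * (4/5) * b1 + (7/10) * (4/5) * b2 + 1 * (1/2) * b3
      = (4/5) * Vs - (4/5) * Vs * α / (1 - Vs) := by
  rw [eq_sub_iff_add_eq', ← eq_sub_iff_add_eq, div_eq_iff hVs]
  linear_combination ((4/5) * Vs) * hsum - ((4/5) * Vs) * hprop + hacc

theorem stmt_12_general (a1 a2 a3 b1 b2 b3 Vs α : ℝ)
    (hasum : a1 + a2 + a3 = 1)
    (hbsum : b1 + b2 + b3 = 1)
    (hVs1 : 5/8 < Vs) (hVs2 : Vs < 1)
    (hprop1 : (5/8) * a1 + (7/10) * a2 + 1 * a3 = Vs + α)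
    (hprop2 : (5/8) * b1 + (7/10) * b2 + 1 * b3 = Vs + α)
    (hacc1 : (5/8 - Vs) * (3/5) * a1 + (7/10 - Vs) * (1/2) * a2 + (1 - Vs) * (1/2) * a3 = 0)
    (hacc2 : (5/8 - Vs) * (4/5) * b1 + (7/10 - Vs) * (4/5) * b2 + (1 - Vs) * (1/2) * b3 = 0) :
    (3/10) * ((5/8) * (3/5) * a1 + (7/10) * (1/2) * a2 + 1 * (1/2) * a3)
      + (1 - 3/10) * ((5/8) * (4/5) * b1 + (7/10) * (4/5) * b2 + 1 * (1/2) * b3)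
      = (71/100) * Vs + ((100 - 142 * Vs) / (25 * (8 * Vs - 5) * (1 - Vs))) * Vs * α := by
  have h8 : 8 * Vs - 5 ≠ 0 := by linarith
  have h1 : 1 - Vs ≠ 0 := by linarith
  have partial_fractions : (100 - 142 * Vs) / (25 * (8 * Vs - 5) * (1 - Vs))
      = (6/5) / (8 * Vs - 5) - (14/25) / (1 - Vs) := by
    rw [div_sub_div _ _ h8 h1, div_eq_div_iff (by simp [h8, h1]) (mul_ne_zero h8 h1)]
    ring
  rw [groupOne_revenue_eq h8 hasum hprop1 hacc1, groupTwo_revenue_eq h1 hbsum hprop2 hacc2,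
    partial_fractions]
  ring

/-- Closed-form revenue parametrization: a policy pair with expected proposed
price `V_s + α` in both groups and expected accepted price `V_s` in both groups
has revenue
`(71/100)·V_s + ((100 − 142 V_s)/(25 (8V_s − 5)(1 − V_s)))·V_s·α`. -/
theorem stmt_12 (a1 a2 a3 b1 b2 b3 Vs α : ℝ)
    (ha1 : 0 ≤ a1) (ha2 : 0 ≤ a2) (ha3 : 0 ≤ a3) (hasum : a1 + a2 + a3 = 1)
    (hb1 : 0 ≤ b1) (hb2 : 0 ≤ b2) (hb3 : 0 ≤ b3) (hbsum : b1 + b2 + b3 = 1)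
    (hVs1 : 5/8 < Vs) (hVs2 : Vs < 1)
    (hprop1 : (5/8) * a1 + (7/10) * a2 + 1 * a3 = Vs + α)
    (hprop2 : (5/8) * b1 + (7/10) * b2 + 1 * b3 = Vs + α)
    (hacc1 : (5/8 - Vs) * (3/5) * a1 + (7/10 - Vs) * (1/2) * a2 + (1 - Vs) * (1/2) * a3 = 0)
    (hacc2 : (5/8 - Vs) * (4/5) * b1 + (7/10 - Vs) * (4/5) * b2 + (1 - Vs) * (1/2) * b3 = 0) :
    (3/10) * ((5/8) * (3/5) * a1 + (7/10) * (1/2) * a2 + 1 * (1/2) * a3)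
      + (1 - 3/10) * ((5/8) * (4/5) * b1 + (7/10) * (4/5) * b2 + 1 * (1/2) * b3)
      = (71/100) * Vs + ((100 - 142 * Vs) / (25 * (8 * Vs - 5) * (1 - Vs))) * Vs * α :=
  stmt_12_general a1 a2 a3 b1 b2 b3 Vs α hasum hbsum hVs1 hVs2 hprop1 hprop2 hacc1 hacc2
end

section
/- Let v = (5/8, 7/10, 1) and F1 = (3/5, 1/2, 1/2). Suppose π¹ ∈ ℝ³ is a probability vector satisfying Σᵢ vᵢ π¹ᵢ = V_s + α and Σᵢ (vᵢ − V_s)·F1ᵢ·π¹ᵢ = 0 for some V_s ∈ (5/8, 1) and α ≥ 0. Then α ≤ (8V_s − 5)(1 − V_s)/(8V_s + 10). -/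
/-- Upper bound `B₁` on the gap `α` between the expected proposed price
`V_s + α` and the expected accepted price `V_s` of a feasible Group-1 policy:
`α ≤ (8V_s − 5)(1 − V_s)/(8V_s + 10)`. -/
theorem stmt_13 (a1 a2 a3 Vs α : ℝ)
    (ha1 : 0 ≤ a1) (ha2 : 0 ≤ a2) (ha3 : 0 ≤ a3) (hasum : a1 + a2 + a3 = 1)
    (hVs1 : 5/8 < Vs) (hVs2 : Vs < 1) (hα : 0 ≤ α)
    (hprop : (5/8) * a1 + (7/10) * a2 + 1 * a3 = Vs + α)
    (hacc : (5/8 - Vs) * (3/5) * a1 + (7/10 - Vs) * (1/2) * a2 + (1 - Vs) * (1/2) * a3 = 0) :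
    α ≤ (8 * Vs - 5) * (1 - Vs) / (8 * Vs + 10) := by
  rw [le_div_iff₀ (by linarith)]
  have key : a2 * (5 - 8*Vs) / 100 = (1-Vs)/2 - (5+4*Vs)*(1-Vs-α)/15 := by
    nlinarith [hacc, hprop, hasum, sq_nonneg Vs]
  nlinarith [mul_nonneg ha2 (by linarith : (0:ℝ) ≤ 8*Vs - 5)]
end

section
/- Let Q ⊂ ℝⁿ be a compact convex polytope (the intersection of finitely many closed half-spaces that is bounded), let d ∈ ℝⁿ be nonzero, and suppose Q₀ = {x ∈ Q : ⟨d, x⟩ = 0} is nonempty. Then there exists a constant C ≥ 0 such that for every z ∈ ℝ and every θ_z ∈ Q with ⟨d, θ_z⟩ = z, there exists θ₀ ∈ Q₀ with ‖θ_z − θ₀‖₂ ≤ C·|z|. -/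
/-! A bounded polyhedron has finitely many extreme points, since an extreme point is determined
by its set of tight constraints; by Krein–Milman it is therefore the convex hull of a finite set
`V`. Fix `y₀ ∈ Q` with `⟪d, y₀⟫ = 0` and write `θ = ∑ w_v v` as a convex combination with
`z = ⟪d, θ⟫ ≥ 0` (the case `z ≤ 0` is symmetric). Pulling every vertex `v` with `⟪d, v⟫ > 0`
towards `y₀` by the common fraction `s = z / ∑_{⟪d, v⟫ > 0} w_v ⟪d, v⟫ ≤ 1` gives a point of
`Q` on the slice, at distance at most `s ∑ w_v ‖v - y₀‖ ≤ C z`, where `C` bounds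
`‖v - y₀‖ / |⟪d, v⟫|` over the vertices off the slice. -/

open Filter Topology

section Polyhedron

variable {E ι : Type*} [AddCommGroup E] [Module ℝ E] {g : ι → E →ₗ[ℝ] ℝ} {b : ι → ℝ}

theorem convex_polyhedron : Convex ℝ {x : E | ∀ i, g i x ≤ b i} := by
  simp only [Set.ofPred_forall]
  exact convex_iInter fun i => convex_halfSpace_le (g i).isLinear (b i)

/-- Moving from `x` slightly away from `y` stays feasible, so `x` lies inside a feasible segment
ending at `y`. -/
theorem eq_of_mem_extremePoints_polyhedron [Finite ι] {x y : E}
    (hx : x ∈ {x | ∀ i, g i x ≤ b i}.extremePoints ℝ) (hy : ∀ i, g i y ≤ b i)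
    (hact : ∀ i, g i x = b i → g i y = b i) : y = x := by
  have hfeas : ∀ᶠ ε in 𝓝 (0 : ℝ), ∀ i, g i (x - ε • (y - x)) ≤ b i := by
    refine eventually_all.2 fun i => ?_
    simp only [map_sub, map_smul, smul_eq_mul]
    rcases (hx.1 i).eq_or_lt with h | h
    · exact .of_forall fun ε => by rw [hact i h, h]; simp
    · refine (ContinuousAt.eventually_lt (by fun_prop) continuousAt_const ?_).mono
        fun _ => le_of_lt
      simpa using h
  obtain ⟨ε, hεQ, hε : 0 < ε⟩ :=
    ((hfeas.filter_mono nhdsWithin_le_nhds).and (self_mem_nhdsWithin (s := Set.Ioi 0))).exists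
  have hsum : ε • y + (x - ε • (y - x)) = (1 + ε) • x := by module
  refine hx.2 hy hεQ
    ⟨ε * (1 + ε)⁻¹, (1 + ε)⁻¹, by positivity, by positivity, by field_simp; ring, ?_⟩
  rw [mul_comm, mul_smul, ← smul_add, hsum, inv_smul_smul₀ (by positivity)]

theorem finite_extremePoints_polyhedron [Finite ι] :
    ({x | ∀ i, g i x ≤ b i} : Set E).extremePoints ℝ |>.Finite :=
  Set.Finite.of_finite_image (f := fun x => {i | g i x = b i}) (Set.toFinite _)
    fun _ hx _ hy hxy => (eq_of_mem_extremePoints_polyhedron hy hx.1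
      fun i hi => (Set.ext_iff.1 hxy i).2 hi)

end Polyhedron

theorem IsCompact.exists_finset_eq_convexHull {E : Type*} [AddCommGroup E] [Module ℝ E]
    [TopologicalSpace E] [T2Space E] [IsTopologicalAddGroup E] [ContinuousSMul ℝ E]
    [LocallyConvexSpace ℝ E] {s : Set E} (hs : IsCompact s) (hconv : Convex ℝ s)
    (hfin : (s.extremePoints ℝ).Finite) : ∃ V : Finset E, s = convexHull ℝ (V : Set E) :=
  ⟨hfin.toFinset, by rw [Set.Finite.coe_toFinset, ← (hfin.isClosed_convexHull (𝕜 := ℝ)).closure_eq,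
    closure_convexHull_extremePoints hs hconv]⟩

section Shifting

variable {E : Type*} [SeminormedAddCommGroup E] [NormedSpace ℝ E] {V : Finset E}
  {f : E →ₗ[ℝ] ℝ} {y₀ : E} {C : ℝ}

theorem exists_mem_convexHull_ker_near_of_nonneg (hy₀ : y₀ ∈ convexHull ℝ (V : Set E))
    (hfy₀ : f y₀ = 0) (hC : ∀ v ∈ V, 0 < f v → ‖v - y₀‖ ≤ C * f v) {θ : E}
    (hθ : θ ∈ convexHull ℝ (V : Set E)) (hfθ : 0 ≤ f θ) :
    ∃ θ₀ ∈ convexHull ℝ (V : Set E), f θ₀ = 0 ∧ ‖θ - θ₀‖ ≤ C * f θ := by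
  classical
  obtain ⟨w, hw₀, hw₁, hθw⟩ := Finset.mem_convexHull'.1 hθ
  set S := V.filter (fun v => 0 < f v)
  set P := ∑ v ∈ S, w v * f v
  have hθP : f θ ≤ P := by
    simp only [← hθw, P, S, map_sum, map_smul, smul_eq_mul, Finset.sum_filter]
    refine Finset.sum_le_sum fun v hv => ?_
    split_ifs with h
    · rfl
    · exact mul_nonpos_of_nonneg_of_nonpos (hw₀ v hv) (not_lt.1 h)
  -- when `P = 0` also `f θ = 0`, and `s = 0` through `x / 0 = 0`
  set s := f θ / P
  have hs₀ : 0 ≤ s := div_nonneg hfθ (hfθ.trans hθP)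
  have hs₁ : s ≤ 1 := div_le_one_of_le₀ hθP (hfθ.trans hθP)
  have hsP : s * P = f θ := div_mul_cancel_of_imp fun h => le_antisymm (h ▸ hθP) hfθ
  set c : E → E := fun v => if 0 < f v then v + s • (y₀ - v) else v
  have hc : ∀ v ∈ V, c v ∈ convexHull ℝ (V : Set E) := fun v hv => by
    have hv : v ∈ convexHull ℝ (V : Set E) := subset_convexHull ℝ _ hv
    by_cases h : 0 < f v
    · simpa [c, h] using (convex_convexHull ℝ _).add_smul_sub_mem hv hy₀ ⟨hs₀, hs₁⟩
    · simpa [c, h] using hv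
  set θ₀ := ∑ v ∈ V, w v • c v
  have hdiff : θ - θ₀ = s • ∑ v ∈ S, w v • (v - y₀) := by
    rw [← hθw, Finset.smul_sum, Finset.sum_filter, ← Finset.sum_sub_distrib]
    refine Finset.sum_congr rfl fun v _ => ?_
    by_cases h : 0 < f v
    · simp only [c, h, if_true]; module
    · simp [c, h]
  refine ⟨θ₀, (convex_convexHull ℝ _).sum_mem hw₀ hw₁ hc, ?_, ?_⟩
  · have h := congrArg f hdiff
    simp only [map_sub, map_smul, map_sum, hfy₀, sub_zero, smul_eq_mul] at h
    linarith
  · rw [hdiff, norm_smul, Real.norm_of_nonneg hs₀]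
    calc s * ‖∑ v ∈ S, w v • (v - y₀)‖ ≤ s * ∑ v ∈ S, w v * (C * f v) := by
          gcongr
          refine (norm_sum_le _ _).trans (Finset.sum_le_sum fun v hv => ?_)
          obtain ⟨hvV, hfv⟩ := Finset.mem_filter.1 hv
          rw [norm_smul, Real.norm_of_nonneg (hw₀ v hvV)]
          exact mul_le_mul_of_nonneg_left (hC v hvV hfv) (hw₀ v hvV)
      _ = C * (s * P) := by
          simp only [P, Finset.mul_sum]
          exact Finset.sum_congr rfl fun _ _ => by ring
      _ = C * f θ := by rw [hsP]

theorem exists_mem_convexHull_ker_near (hy₀ : y₀ ∈ convexHull ℝ (V : Set E)) (hfy₀ : f y₀ = 0) :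
    ∃ C, 0 ≤ C ∧ ∀ θ ∈ convexHull ℝ (V : Set E),
      ∃ θ₀ ∈ convexHull ℝ (V : Set E), f θ₀ = 0 ∧ ‖θ - θ₀‖ ≤ C * |f θ| := by
  -- vertices on the slice contribute `0` through `x / 0 = 0`
  set C := ∑ v ∈ V, ‖v - y₀‖ / |f v|
  have hC : ∀ v ∈ V, f v ≠ 0 → ‖v - y₀‖ ≤ C * |f v| := fun v hv hfv =>
    calc ‖v - y₀‖ = ‖v - y₀‖ / |f v| * |f v| := (div_mul_cancel₀ _ (abs_ne_zero.2 hfv)).symm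
      _ ≤ C * |f v| := by
        gcongr
        exact Finset.single_le_sum (f := fun v => ‖v - y₀‖ / |f v|) (fun _ _ => by positivity) hv
  refine ⟨C, Finset.sum_nonneg fun _ _ => by positivity, fun θ hθ => ?_⟩
  rcases le_total 0 (f θ) with h | h
  · rw [abs_of_nonneg h]
    exact exists_mem_convexHull_ker_near_of_nonneg hy₀ hfy₀
      (fun v hv hfv => abs_of_pos hfv ▸ hC v hv hfv.ne') hθ h
  · have hC' : ∀ v ∈ V, 0 < (-f) v → ‖v - y₀‖ ≤ C * (-f) v := fun v hv hfv => by
      have hfv : f v < 0 := by simpa using hfv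
      simpa [abs_of_neg hfv] using hC v hv hfv.ne
    obtain ⟨θ₀, hθ₀, hfθ₀, hnorm⟩ :=
      exists_mem_convexHull_ker_near_of_nonneg hy₀ (by simp [hfy₀]) hC' hθ (by simpa using h)
    exact ⟨θ₀, hθ₀, by simpa using hfθ₀, by simpa [abs_of_nonpos h] using hnorm⟩

end Shifting

theorem stmt_17_general (n : ℕ) (Q : Set (EuclideanSpace ℝ (Fin n)))
    (m : ℕ) (a : Fin m → EuclideanSpace ℝ (Fin n)) (b : Fin m → ℝ)
    (hQ : Q = {x | ∀ i, inner ℝ (a i) x ≤ b i})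
    (hcompact : IsCompact Q)
    (d : EuclideanSpace ℝ (Fin n))
    (hQ0 : ∃ x ∈ Q, (inner ℝ d x : ℝ) = 0) :
    ∃ C : ℝ, 0 ≤ C ∧ ∀ (z : ℝ) (θz : EuclideanSpace ℝ (Fin n)),
      θz ∈ Q → (inner ℝ d θz : ℝ) = z →
      ∃ θ₀ ∈ Q, (inner ℝ d θ₀ : ℝ) = 0 ∧ ‖θz - θ₀‖ ≤ C * |z| := by
  obtain ⟨y₀, hy₀Q, hy₀⟩ := hQ0
  have hQpoly : Q = {x | ∀ i, innerₗ _ (a i) x ≤ b i} := hQ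
  obtain ⟨V, rfl⟩ := hcompact.exists_finset_eq_convexHull (hQpoly ▸ convex_polyhedron)
    (hQpoly ▸ finite_extremePoints_polyhedron)
  obtain ⟨C, hC₀, hC⟩ := exists_mem_convexHull_ker_near (f := innerₗ _ d) hy₀Q hy₀
  exact ⟨C, hC₀, fun z θ hθ hθz => hθz ▸ hC θ hθ⟩

/-- Bounded shifting lemma (Hoffman-type error bound): let `Q` be a compact
convex polytope in Euclidean space (an intersection of finitely many closed
half-spaces that is bounded), `d ≠ 0`, and suppose the slice
`Q₀ = {x ∈ Q : ⟪d, x⟫ = 0}` is nonempty. Then there is `C ≥ 0` such that for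
every `z` and every `θ_z ∈ Q` with `⟪d, θ_z⟫ = z`, some `θ₀ ∈ Q₀` satisfies
`‖θ_z − θ₀‖ ≤ C·|z|`. -/
theorem stmt_17 (n : ℕ) (Q : Set (EuclideanSpace ℝ (Fin n)))
    (m : ℕ) (a : Fin m → EuclideanSpace ℝ (Fin n)) (b : Fin m → ℝ)
    (hQ : Q = {x | ∀ i, inner ℝ (a i) x ≤ b i})
    (hcompact : IsCompact Q)
    (d : EuclideanSpace ℝ (Fin n)) (hd : d ≠ 0)
    (hQ0 : ∃ x ∈ Q, (inner ℝ d x : ℝ) = 0) :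
    ∃ C : ℝ, 0 ≤ C ∧ ∀ (z : ℝ) (θz : EuclideanSpace ℝ (Fin n)),
      θz ∈ Q → (inner ℝ d θz : ℝ) = z →
      ∃ θ₀ ∈ Q, (inner ℝ d θ₀ : ℝ) = 0 ∧ ‖θz - θ₀‖ ≤ C * |z| :=
  stmt_17_general n Q m a b hQ hcompact d hQ0
end
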